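/- Assume the F-expectation satisfies (H0)–(H7) and let {X(τ):τ∈S_0} be a CE admissible family with sup_{τ∈S_0} E[X(τ)] < ∞, with value function v. Then for every S∈S_0 and every λ∈(0,1), the random time τ^λ(S)=essinf{τ∈S_S: λ v(τ) ≤ X(τ) a.s.} is a stopping time and satisfies v(S) = E_S[v(τ^λ(S))] a.s. -/

import Mathlib

open MeasureTheory Filter Set

noncomputable section

namespace OptMultStop

variable {Ω : Type*}

/-- A real function is right-continuous with left limits (RCLL) on `[0, T]`. -/
def RCLLOn (f : ℝ → ℝ) (T : ℝ) : Prop :=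
  (∀ t ∈ Set.Ico (0 : ℝ) T, ContinuousWithinAt f (Set.Ici t) t) ∧
    ∀ t ∈ Set.Ioc (0 : ℝ) T, ∃ l : ℝ, Filter.Tendsto f (nhdsWithin t (Set.Iio t)) (nhds l)

/-- A real function is right-continuous on `[0, T)`. -/
def RCOn (f : ℝ → ℝ) (T : ℝ) : Prop :=
  ∀ t ∈ Set.Ico (0 : ℝ) T, ContinuousWithinAt f (Set.Ici t) t

/-- `τ` is a stopping time for `ℱ` taking values in `[s ·, T]`; for `s = S` a stopping
time this encodes membership in `S_S`. -/
def IsStopIn [m : MeasurableSpace Ω] (ℱ : Filtration ℝ m) (T : ℝ) (s τ : Ω → ℝ) : Prop :=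
  IsStoppingTime ℱ (fun ω => (τ ω : WithTop ℝ)) ∧ (∀ ω, s ω ≤ τ ω) ∧ ∀ ω, τ ω ≤ T

/-- Membership in `S_0`: a stopping time with values in `[0, T]`. -/
def Stop0 [m : MeasurableSpace Ω] (ℱ : Filtration ℝ m) (T : ℝ) (τ : Ω → ℝ) : Prop :=
  IsStopIn ℱ T (fun _ => (0 : ℝ)) τ

/-- `g` is an essential supremum of the family of random variables `s`. -/
def IsEssSupFam [MeasurableSpace Ω] (μ : Measure Ω) (s : Set (Ω → ℝ)) (g : Ω → ℝ) : Prop :=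
  (∀ f ∈ s, f ≤ᵐ[μ] g) ∧ ∀ h : Ω → ℝ, (∀ f ∈ s, f ≤ᵐ[μ] h) → g ≤ᵐ[μ] h

/-- `g` is an essential infimum of the family of random variables `s`. -/
def IsEssInfFam [MeasurableSpace Ω] (μ : Measure Ω) (s : Set (Ω → ℝ)) (g : Ω → ℝ) : Prop :=
  (∀ f ∈ s, g ≤ᵐ[μ] f) ∧ ∀ h : Ω → ℝ, (∀ f ∈ s, h ≤ᵐ[μ] f) → h ≤ᵐ[μ] g

/-- An `𝔽`-consistent nonlinear expectation `(E, Dom(E))` on the horizon `[0, T]`,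
together with its conditional versions at stopping times, satisfying the domain
axioms (D1)-(D3), (A1)-(A4) at stopping times, and hypotheses (H0)-(H5). -/
structure FExp [m : MeasurableSpace Ω] (μ : Measure Ω) (T : ℝ) (ℱ : Filtration ℝ m) where
  /-- the domain `Dom(E)` -/
  Dom : Set (Ω → ℝ)
  /-- `cond τ ξ` is the conditional expectation `E_τ[ξ]` at the stopping time `τ` -/
  cond : (Ω → ℝ) → (Ω → ℝ) → Ω → ℝ
  /-- `E0 ξ` is the (deterministic) value `E[ξ] = E_0[ξ]` -/
  E0 : (Ω → ℝ) → ℝ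
  zero_mem : (fun _ => (0 : ℝ)) ∈ Dom
  one_mem : (fun _ => (1 : ℝ)) ∈ Dom
  /-- (H4): all constants belong to the domain -/
  const_mem : ∀ c : ℝ, (fun _ => c) ∈ Dom
  add_mem : ∀ {ξ η : Ω → ℝ}, ξ ∈ Dom → η ∈ Dom → ξ + η ∈ Dom
  indicator_mem : ∀ {ξ : Ω → ℝ}, ξ ∈ Dom → ∀ {A : Set Ω}, MeasurableSet A →
    A.indicator ξ ∈ Dom
  sandwich_mem : ∀ {ξ η : Ω → ℝ}, η ∈ Dom → (∀ᵐ ω ∂μ, 0 ≤ ξ ω ∧ ξ ω ≤ η ω) → ξ ∈ Dom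
  cond_mem : ∀ {τ ξ : Ω → ℝ}, Stop0 ℱ T τ → ξ ∈ Dom → 0 ≤ᵐ[μ] ξ → cond τ ξ ∈ Dom
  cond_nonneg : ∀ {τ ξ : Ω → ℝ}, Stop0 ℱ T τ → ξ ∈ Dom → 0 ≤ᵐ[μ] ξ → 0 ≤ᵐ[μ] cond τ ξ
  /-- `E_τ[ξ]` is `F_τ`-measurable -/
  cond_adapted : ∀ {τ ξ : Ω → ℝ} (hτ : Stop0 ℱ T τ), ξ ∈ Dom → 0 ≤ᵐ[μ] ξ →
    Measurable[hτ.1.measurableSpace] (cond τ ξ)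
  /-- monotonicity -/
  mono : ∀ {τ ξ η : Ω → ℝ}, Stop0 ℱ T τ → ξ ∈ Dom → 0 ≤ᵐ[μ] ξ → η ∈ Dom → 0 ≤ᵐ[μ] η →
    ξ ≤ᵐ[μ] η → cond τ ξ ≤ᵐ[μ] cond τ η
  /-- strict monotonicity -/
  strict_mono : ∀ {τ ξ η : Ω → ℝ}, Stop0 ℱ T τ → ξ ∈ Dom → 0 ≤ᵐ[μ] ξ → η ∈ Dom →
    0 ≤ᵐ[μ] η → ξ ≤ᵐ[μ] η → cond τ ξ =ᵐ[μ] cond τ η → ξ =ᵐ[μ] η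
  /-- time consistency -/
  time_consistent : ∀ {σ τ ξ : Ω → ℝ}, Stop0 ℱ T σ → Stop0 ℱ T τ → (∀ ω, σ ω ≤ τ ω) →
    ξ ∈ Dom → 0 ≤ᵐ[μ] ξ → cond σ (cond τ ξ) =ᵐ[μ] cond σ ξ
  /-- zero-one law -/
  zero_one : ∀ {τ ξ : Ω → ℝ} (hτ : Stop0 ℱ T τ), ξ ∈ Dom → 0 ≤ᵐ[μ] ξ →
    ∀ {A : Set Ω}, MeasurableSet[hτ.1.measurableSpace] A →
    cond τ (A.indicator ξ) =ᵐ[μ] A.indicator (cond τ ξ)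
  /-- translation invariance -/
  translation : ∀ {τ ξ η : Ω → ℝ} (hτ : Stop0 ℱ T τ), ξ ∈ Dom → 0 ≤ᵐ[μ] ξ → η ∈ Dom →
    0 ≤ᵐ[μ] η → Measurable[hτ.1.measurableSpace] η → cond τ (ξ + η) =ᵐ[μ] cond τ ξ + η
  /-- `F_0` is trivial: `E_0[ξ]` is the constant `E0 ξ` -/
  E0_eq : ∀ {ξ : Ω → ℝ}, ξ ∈ Dom → 0 ≤ᵐ[μ] ξ →
    cond (fun _ => (0 : ℝ)) ξ =ᵐ[μ] fun _ => E0 ξ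
  /-- the process `t ↦ E_t[ξ]` has RCLL paths -/
  rcll_paths : ∀ {ξ : Ω → ℝ}, ξ ∈ Dom → 0 ≤ᵐ[μ] ξ →
    ∀ᵐ ω ∂μ, RCLLOn (fun t => cond (fun _ => t) ξ ω) T
  /-- (H0) -/
  h0 : ∀ {A : Set Ω}, MeasurableSet A → 0 < μ A →
    Tendsto (fun n : ℕ => E0 (A.indicator fun _ => (n : ℝ))) atTop atTop
  /-- (H1) -/
  h1 : ∀ {ξ : Ω → ℝ}, ξ ∈ Dom → 0 ≤ᵐ[μ] ξ → ∀ {A : ℕ → Set Ω},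
    (∀ n, MeasurableSet (A n)) → Monotone A → (∀ᵐ ω ∂μ, ω ∈ ⋃ n, A n) →
    Tendsto (fun n => E0 ((A n).indicator ξ)) atTop (nhds (E0 ξ))
  /-- (H2) -/
  h2 : ∀ {ξ η : Ω → ℝ}, ξ ∈ Dom → 0 ≤ᵐ[μ] ξ → η ∈ Dom → 0 ≤ᵐ[μ] η →
    ∀ {A : ℕ → Set Ω}, (∀ n, MeasurableSet (A n)) → Antitone A →
    (∀ᵐ ω ∂μ, ω ∉ ⋂ n, A n) →
    Tendsto (fun n => E0 (ξ + (A n).indicator η)) atTop (nhds (E0 ξ))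
  /-- (H5) -/
  h5 : ∀ {ξ : ℕ → Ω → ℝ} {ζ : Ω → ℝ}, (∀ n, ξ n ∈ Dom) → (∀ n, 0 ≤ᵐ[μ] ξ n) →
    (∀ᵐ ω ∂μ, Tendsto (fun n => ξ n ω) atTop (nhds (ζ ω))) →
    (∃ C : ℝ, ∃ᶠ n in atTop, E0 (ξ n) ≤ C) → ζ ∈ Dom

variable [m : MeasurableSpace Ω] {μ : Measure Ω} {T : ℝ} {ℱ : Filtration ℝ m}

/-- (H6): sub-additivity. -/
def FExp.Subadditive (𝔈 : FExp μ T ℱ) : Prop :=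
  ∀ ⦃τ ξ η : Ω → ℝ⦄, Stop0 ℱ T τ → ξ ∈ 𝔈.Dom → 0 ≤ᵐ[μ] ξ → η ∈ 𝔈.Dom → 0 ≤ᵐ[μ] η →
    𝔈.cond τ (ξ + η) ≤ᵐ[μ] 𝔈.cond τ ξ + 𝔈.cond τ η

/-- (H7): positive homogeneity. -/
def FExp.PosHom (𝔈 : FExp μ T ℱ) : Prop :=
  ∀ ⦃τ ξ : Ω → ℝ⦄ (l : ℝ), 0 ≤ l → Stop0 ℱ T τ → ξ ∈ 𝔈.Dom → 0 ≤ᵐ[μ] ξ →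
    𝔈.cond τ (fun ω => l * ξ ω) =ᵐ[μ] fun ω => l * 𝔈.cond τ ξ ω

/-- Admissible family of rewards indexed by stopping times. -/
def Admissible (𝔈 : FExp μ T ℱ) (X : (Ω → ℝ) → Ω → ℝ) : Prop :=
  (∀ τ : Ω → ℝ, ∀ hτ : Stop0 ℱ T τ, X τ ∈ 𝔈.Dom ∧ 0 ≤ᵐ[μ] X τ ∧
      Measurable[hτ.1.measurableSpace] (X τ)) ∧
    ∀ τ σ : Ω → ℝ, Stop0 ℱ T τ → Stop0 ℱ T σ →
      ∀ᵐ ω ∂μ, τ ω = σ ω → X τ ω = X σ ω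

/-- `sup_{τ ∈ S_0} E[X(τ)] < ∞`. -/
def BddRewardE0 (𝔈 : FExp μ T ℱ) (X : (Ω → ℝ) → Ω → ℝ) : Prop :=
  ∃ C : ℝ, ∀ τ : Ω → ℝ, Stop0 ℱ T τ → 𝔈.E0 (X τ) ≤ C

/-- `v` is the value function family of the single stopping problem for the reward `X`:
`v(S) = esssup_{τ ∈ S_S} E_S[X(τ)]`. -/
def IsValueFam (𝔈 : FExp μ T ℱ) (X v : (Ω → ℝ) → Ω → ℝ) : Prop :=
  ∀ S : Ω → ℝ, Stop0 ℱ T S →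
    IsEssSupFam μ {g | ∃ τ : Ω → ℝ, IsStopIn ℱ T S τ ∧ g = 𝔈.cond S (X τ)} (v S)

/-- An `E`-supermartingale system. -/
def SupermartSys (𝔈 : FExp μ T ℱ) (h : (Ω → ℝ) → Ω → ℝ) : Prop :=
  (∀ τ : Ω → ℝ, ∀ hτ : Stop0 ℱ T τ, h τ ∈ 𝔈.Dom ∧ 0 ≤ᵐ[μ] h τ ∧
      Measurable[hτ.1.measurableSpace] (h τ)) ∧
    ∀ τ σ : Ω → ℝ, Stop0 ℱ T τ → Stop0 ℱ T σ → (∀ᵐ ω ∂μ, τ ω ≤ σ ω) →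
      𝔈.cond τ (h σ) ≤ᵐ[μ] h τ

/-- Right-continuity along stopping times in `E`-expectation (RCE). -/
def RCE (𝔈 : FExp μ T ℱ) (X : (Ω → ℝ) → Ω → ℝ) : Prop :=
  ∀ τ : Ω → ℝ, Stop0 ℱ T τ → ∀ τs : ℕ → Ω → ℝ, (∀ n, Stop0 ℱ T (τs n)) →
    (∀ᵐ ω ∂μ, Antitone (fun n => τs n ω) ∧
      Tendsto (fun n => τs n ω) atTop (nhds (τ ω))) →
    Tendsto (fun n => 𝔈.E0 (X (τs n))) atTop (nhds (𝔈.E0 (X τ)))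

/-- Left-continuity along stopping times in `E`-expectation (LCE). -/
def LCE (𝔈 : FExp μ T ℱ) (X : (Ω → ℝ) → Ω → ℝ) : Prop :=
  ∀ τ : Ω → ℝ, Stop0 ℱ T τ → ∀ τs : ℕ → Ω → ℝ, (∀ n, Stop0 ℱ T (τs n)) →
    (∀ᵐ ω ∂μ, Monotone (fun n => τs n ω) ∧
      Tendsto (fun n => τs n ω) atTop (nhds (τ ω))) →
    Tendsto (fun n => 𝔈.E0 (X (τs n))) atTop (nhds (𝔈.E0 (X τ)))

/-- Continuity along stopping times in `E`-expectation (CE). -/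
def CE (𝔈 : FExp μ T ℱ) (X : (Ω → ℝ) → Ω → ℝ) : Prop :=
  RCE 𝔈 X ∧ LCE 𝔈 X

/-- Right-continuity along stopping times (RC): a.s. pointwise convergence. -/
def RCfam (𝔈 : FExp μ T ℱ) (X : (Ω → ℝ) → Ω → ℝ) : Prop :=
  ∀ τ : Ω → ℝ, Stop0 ℱ T τ → ∀ τs : ℕ → Ω → ℝ, (∀ n, Stop0 ℱ T (τs n)) →
    (∀ᵐ ω ∂μ, Antitone (fun n => τs n ω) ∧
      Tendsto (fun n => τs n ω) atTop (nhds (τ ω))) →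
    ∀ᵐ ω ∂μ, Tendsto (fun n => X (τs n) ω) atTop (nhds (X τ ω))

/-- Biadmissible family of rewards indexed by pairs of stopping times. -/
def Biadmissible (𝔈 : FExp μ T ℱ) (X : (Ω → ℝ) → (Ω → ℝ) → Ω → ℝ) : Prop :=
  (∀ τ σ : Ω → ℝ, ∀ hτ : Stop0 ℱ T τ, ∀ hσ : Stop0 ℱ T σ,
      X τ σ ∈ 𝔈.Dom ∧ 0 ≤ᵐ[μ] X τ σ ∧
      Measurable[(hτ.1.max hσ.1).measurableSpace] (X τ σ)) ∧
    ∀ τ σ τ' σ' : Ω → ℝ, Stop0 ℱ T τ → Stop0 ℱ T σ → Stop0 ℱ T τ' → Stop0 ℱ T σ' →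
      ∀ᵐ ω ∂μ, τ ω = τ' ω → σ ω = σ' ω → X τ σ ω = X τ' σ' ω

/-- `sup_{τ,σ ∈ S_0} E[X(τ,σ)] < ∞`. -/
def BddReward2E0 (𝔈 : FExp μ T ℱ) (X : (Ω → ℝ) → (Ω → ℝ) → Ω → ℝ) : Prop :=
  ∃ C : ℝ, ∀ τ σ : Ω → ℝ, Stop0 ℱ T τ → Stop0 ℱ T σ → 𝔈.E0 (X τ σ) ≤ C

/-- `v` is the value function family of the double stopping problem:
`v(S) = esssup_{τ₁,τ₂ ∈ S_S} E_S[X(τ₁,τ₂)]`. -/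
def IsValueFam2 (𝔈 : FExp μ T ℱ) (X : (Ω → ℝ) → (Ω → ℝ) → Ω → ℝ)
    (v : (Ω → ℝ) → Ω → ℝ) : Prop :=
  ∀ S : Ω → ℝ, Stop0 ℱ T S →
    IsEssSupFam μ
      {g | ∃ τ₁ τ₂ : Ω → ℝ, IsStopIn ℱ T S τ₁ ∧ IsStopIn ℱ T S τ₂ ∧
        g = 𝔈.cond S (X τ₁ τ₂)} (v S)

/-- `u₁(θ) = esssup_{τ₁ ∈ S_θ} E_θ[X(τ₁, θ)]`. -/
def IsU1 (𝔈 : FExp μ T ℱ) (X : (Ω → ℝ) → (Ω → ℝ) → Ω → ℝ) (u₁ : (Ω → ℝ) → Ω → ℝ) : Prop :=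
  ∀ θ : Ω → ℝ, Stop0 ℱ T θ →
    IsEssSupFam μ {g | ∃ τ : Ω → ℝ, IsStopIn ℱ T θ τ ∧ g = 𝔈.cond θ (X τ θ)} (u₁ θ)

/-- `u₂(θ) = esssup_{τ₂ ∈ S_θ} E_θ[X(θ, τ₂)]`. -/
def IsU2 (𝔈 : FExp μ T ℱ) (X : (Ω → ℝ) → (Ω → ℝ) → Ω → ℝ) (u₂ : (Ω → ℝ) → Ω → ℝ) : Prop :=
  ∀ θ : Ω → ℝ, Stop0 ℱ T θ →
    IsEssSupFam μ {g | ∃ τ : Ω → ℝ, IsStopIn ℱ T θ τ ∧ g = 𝔈.cond θ (X θ τ)} (u₂ θ)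

/-- Uniform right-continuity of a biadmissible family along stopping times in
`ℰ`-expectation (URCℰ). -/
def URCE2 (ℰ : FExp μ T ℱ) (X : (Ω → ℝ) → (Ω → ℝ) → Ω → ℝ) : Prop :=
  ∀ σ : Ω → ℝ, Stop0 ℱ T σ → ∀ σs : ℕ → Ω → ℝ, (∀ n, Stop0 ℱ T (σs n)) →
    (∀ᵐ ω ∂μ, Antitone (fun n => σs n ω) ∧
      Tendsto (fun n => σs n ω) atTop (nhds (σ ω))) →
    ∀ ε : ℝ, 0 < ε → ∃ N : ℕ, ∀ n ≥ N, ∀ τ : Ω → ℝ, Stop0 ℱ T τ →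
      ℰ.E0 (fun ω => |X τ σ ω - X τ (σs n) ω|) ≤ ε ∧
      ℰ.E0 (fun ω => |X σ τ ω - X (σs n) τ ω|) ≤ ε

/-- Uniform left-continuity of a biadmissible family along stopping times in
`ℰ`-expectation (ULCℰ). -/
def ULCE2 (ℰ : FExp μ T ℱ) (X : (Ω → ℝ) → (Ω → ℝ) → Ω → ℝ) : Prop :=
  ∀ σ : Ω → ℝ, Stop0 ℱ T σ → ∀ σs : ℕ → Ω → ℝ, (∀ n, Stop0 ℱ T (σs n)) →
    (∀ᵐ ω ∂μ, Monotone (fun n => σs n ω) ∧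
      Tendsto (fun n => σs n ω) atTop (nhds (σ ω))) →
    ∀ ε : ℝ, 0 < ε → ∃ N : ℕ, ∀ n ≥ N, ∀ τ : Ω → ℝ, Stop0 ℱ T τ →
      ℰ.E0 (fun ω => |X τ σ ω - X τ (σs n) ω|) ≤ ε ∧
      ℰ.E0 (fun ω => |X σ τ ω - X (σs n) τ ω|) ≤ ε

/-- Uniform continuity (UCℰ) of a biadmissible family. -/
def UCE2 (ℰ : FExp μ T ℱ) (X : (Ω → ℝ) → (Ω → ℝ) → Ω → ℝ) : Prop :=
  URCE2 ℰ X ∧ ULCE2 ℰ X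

/-- `(E, Dom(E))` is dominated by `(Ẽ, Dom(Ẽ))`. -/
def Dominated (𝔈 𝔉 : FExp μ T ℱ) : Prop :=
  𝔈.Dom ⊆ 𝔉.Dom ∧
    ∀ τ : Ω → ℝ, Stop0 ℱ T τ → ∀ ξ η : Ω → ℝ, ξ ∈ 𝔈.Dom → η ∈ 𝔈.Dom →
      ∀ᵐ ω ∂μ, 𝔈.cond τ (ξ + η) ω - 𝔈.cond τ η ω ≤ 𝔉.cond τ ξ ω

/-- The filtration contains all `μ`-null sets (part of the usual conditions). -/
def CompleteFiltration (μ : Measure Ω) (ℱ : Filtration ℝ m) : Prop :=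
  ∀ s : Set Ω, μ s = 0 → ∀ t : ℝ, MeasurableSet[ℱ t] s

/-- The filtration is right-continuous (part of the usual conditions). -/
def RightContinuousFiltration (ℱ : Filtration ℝ m) : Prop :=
  ∀ t : ℝ, (ℱ t : MeasurableSpace Ω) = ⨅ u ∈ Set.Ioi t, ℱ u

/-- A `d`-tuple of stopping times, all in `S_s`. -/
def StopVec (ℱ : Filtration ℝ m) (T : ℝ) (s : Ω → ℝ) {d : ℕ} (τ : Fin d → Ω → ℝ) : Prop :=
  ∀ i, IsStopIn ℱ T s (τ i)

/-- A `d`-admissible family of rewards. -/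
def DAdmissible (𝔈 : FExp μ T ℱ) {d : ℕ} (X : (Fin d → Ω → ℝ) → Ω → ℝ) : Prop :=
  (∀ τ : Fin d → Ω → ℝ, StopVec ℱ T (fun _ => (0 : ℝ)) τ →
      X τ ∈ 𝔈.Dom ∧ 0 ≤ᵐ[μ] X τ ∧
      ∀ h : IsStoppingTime ℱ fun ω => (((⨆ i, τ i ω : ℝ)) : WithTop ℝ),
        Measurable[h.measurableSpace] (X τ)) ∧
    ∀ τ σ : Fin d → Ω → ℝ, StopVec ℱ T (fun _ => (0 : ℝ)) τ →
      StopVec ℱ T (fun _ => (0 : ℝ)) σ →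
      ∀ᵐ ω ∂μ, (∀ i, τ i ω = σ i ω) → X τ ω = X σ ω

/-- `sup_{τ ∈ S_0^d} E[X(τ)] < ∞`. -/
def BddRewardDE0 (𝔈 : FExp μ T ℱ) {d : ℕ} (X : (Fin d → Ω → ℝ) → Ω → ℝ) : Prop :=
  ∃ C : ℝ, ∀ τ : Fin d → Ω → ℝ, StopVec ℱ T (fun _ => (0 : ℝ)) τ → 𝔈.E0 (X τ) ≤ C

/-- `v` is the value function family of the `d`-stopping problem:
`v(S) = esssup_{τ ∈ S_S^d} E_S[X(τ)]`. -/
def IsValueFamD (𝔈 : FExp μ T ℱ) {d : ℕ} (X : (Fin d → Ω → ℝ) → Ω → ℝ)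
    (v : (Ω → ℝ) → Ω → ℝ) : Prop :=
  ∀ S : Ω → ℝ, Stop0 ℱ T S →
    IsEssSupFam μ
      {g | ∃ τ : Fin d → Ω → ℝ, StopVec ℱ T S τ ∧ g = 𝔈.cond S (X τ)} (v S)

/-- `u^{(i)}(θ) = esssup_{τ ∈ S_θ^{d-1}} E_θ[X^{(i)}(τ, θ)]`, where `X^{(i)}(τ, θ)`
inserts `θ` in the `i`-th slot. -/
def IsUi (𝔈 : FExp μ T ℱ) {d : ℕ} (X : (Fin (d + 1) → Ω → ℝ) → Ω → ℝ)
    (ui : Fin (d + 1) → (Ω → ℝ) → Ω → ℝ) : Prop :=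
  ∀ i : Fin (d + 1), ∀ θ : Ω → ℝ, Stop0 ℱ T θ →
    IsEssSupFam μ
      {g | ∃ τ : Fin d → Ω → ℝ, StopVec ℱ T θ τ ∧ g = 𝔈.cond θ (X (i.insertNth θ τ))}
      (ui i θ)

/-- Uniform continuity (UCE) of a `d`-admissible family along monotone sequences of
stopping times. -/
def UCED (𝔈 : FExp μ T ℱ) {d : ℕ} (X : (Fin (d + 1) → Ω → ℝ) → Ω → ℝ) : Prop :=
  ∀ i : Fin (d + 1), ∀ S : Ω → ℝ, Stop0 ℱ T S → ∀ Ss : ℕ → Ω → ℝ,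
    (∀ n, Stop0 ℱ T (Ss n)) →
    ((∀ᵐ ω ∂μ, Monotone fun n => Ss n ω) ∨ (∀ᵐ ω ∂μ, Antitone fun n => Ss n ω)) →
    (∀ᵐ ω ∂μ, Tendsto (fun n => Ss n ω) atTop (nhds (S ω))) →
    ∀ ε : ℝ, 0 < ε → ∃ N : ℕ, ∀ n ≥ N, ∀ θ : Fin d → Ω → ℝ,
      StopVec ℱ T (fun _ => (0 : ℝ)) θ →
      𝔈.E0 (fun ω => |X (i.insertNth (Ss n) θ) ω - X (i.insertNth S θ) ω|) ≤ ε


/-!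
Put `J(ρ) = E_ρ[v(τ^λ(ρ))]`. Where `λ v(ρ) ≤ X(ρ)` one has `τ^λ(ρ) = ρ`, so `X(ρ) ≤ v(ρ) = J(ρ)`;
elsewhere `X(ρ) < λ v(ρ)`. Hence `X(ρ) ≤ λ v(ρ) + (1 - λ) J(ρ)`, and sub-additivity, positive
homogeneity, the supermartingale property of `v` and `τ^λ(S) ≤ τ^λ(ρ)` give
`E_S[X(ρ)] ≤ λ v(S) + (1 - λ) E_S[v(τ^λ(S))]` for all `ρ ∈ S_S`. Taking the essential supremum
over `ρ` and using `λ < 1` yields `v(S) ≤ E_S[v(τ^λ(S))]`; the reverse inequality is again the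
supermartingale property.

Essential suprema and infima of directed families are reached along monotone sequences (maximise
`∫ arctan f`). So `v(θ)` is an increasing limit of rewards, which gives the supermartingale
property through monotone convergence for `E`, and `τ^λ(S)` is a countable infimum of stopping
times, hence a stopping time by right-continuity; completeness passes this to every version.
-/

open scoped Topology Classical

section DirectedFamily

/-- Bounded and strictly increasing in `f`: maximising it along a directed family locates the
family's essential supremum. -/
def arctanIntegral (μ : Measure Ω) (f : Ω → ℝ) : ℝ := ∫ ω, Real.arctan (f ω) ∂μ

lemma norm_arctan_le (x : ℝ) : ‖Real.arctan x‖ ≤ Real.pi / 2 := by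
  rw [Real.norm_eq_abs, abs_le]
  exact ⟨(Real.neg_pi_div_two_lt_arctan x).le, (Real.arctan_lt_pi_div_two x).le⟩

variable [IsFiniteMeasure μ]

lemma integrable_arctan_comp {f : Ω → ℝ} (hf : Measurable f) :
    Integrable (fun ω => Real.arctan (f ω)) μ :=
  (integrable_const (Real.pi / 2)).mono'
    (Real.continuous_arctan.measurable.comp hf).aestronglyMeasurable
    (Eventually.of_forall fun ω => norm_arctan_le (f ω))

lemma arctanIntegral_mono {f g : Ω → ℝ} (hf : Measurable f) (hg : Measurable g)
    (hfg : f ≤ᵐ[μ] g) : arctanIntegral μ f ≤ arctanIntegral μ g :=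
  integral_mono_ae (integrable_arctan_comp hf) (integrable_arctan_comp hg)
    (hfg.mono fun _ h => Real.arctan_mono h)

lemma bddAbove_arctanIntegral_image {s : Set (Ω → ℝ)} (hmeas : ∀ f ∈ s, Measurable f) :
    BddAbove (arctanIntegral μ '' s) := by
  refine ⟨∫ _, Real.pi / 2 ∂μ, ?_⟩
  rintro _ ⟨f, hf, rfl⟩
  exact integral_mono (integrable_arctan_comp (hmeas f hf)) (integrable_const _)
    fun ω => (Real.arctan_lt_pi_div_two _).le

lemma tendsto_arctanIntegral {fs : ℕ → Ω → ℝ} {f : Ω → ℝ} (hfs : ∀ n, Measurable (fs n))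
    (hlim : ∀ᵐ ω ∂μ, Tendsto (fun n => fs n ω) atTop (𝓝 (f ω))) :
    Tendsto (fun n => arctanIntegral μ (fs n)) atTop (𝓝 (arctanIntegral μ f)) :=
  tendsto_integral_of_dominated_convergence (fun _ => Real.pi / 2)
    (fun n => (Real.continuous_arctan.measurable.comp (hfs n)).aestronglyMeasurable)
    (integrable_const _) (fun _ => Eventually.of_forall fun _ => norm_arctan_le _)
    (hlim.mono fun _ h => (Real.continuous_arctan.tendsto _).comp h)

lemma ae_le_of_arctanIntegral_sup_le {f g : Ω → ℝ} (hf : Measurable f) (hg : Measurable g)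
    (h : arctanIntegral μ (g ⊔ f) ≤ arctanIntegral μ f) : g ≤ᵐ[μ] f := by
  have hint := (integrable_arctan_comp (μ := μ) (hg.sup hf)).sub (integrable_arctan_comp hf)
  have hnonneg : 0 ≤ fun ω => Real.arctan ((g ⊔ f) ω) - Real.arctan (f ω) :=
    fun ω => sub_nonneg.2 (Real.arctan_mono le_sup_right)
  have hzero : ∫ ω, (Real.arctan ((g ⊔ f) ω) - Real.arctan (f ω)) ∂μ = 0 := by
    rw [integral_sub (integrable_arctan_comp (hg.sup hf)) (integrable_arctan_comp hf)]
    exact le_antisymm (sub_nonpos.2 h) (sub_nonneg.2 (arctanIntegral_mono hf (hg.sup hf)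
      (Eventually.of_forall fun _ => le_sup_right)))
  filter_upwards [(integral_eq_zero_iff_of_nonneg hnonneg hint).1 hzero] with ω hω
  have : (g ⊔ f) ω = f ω := Real.arctan_injective (sub_eq_zero.1 hω)
  exact le_sup_left.trans this.le

lemma exists_monotone_seq_tendsto_sSup_arctanIntegral {s : Set (Ω → ℝ)} (hne : s.Nonempty)
    (hmeas : ∀ f ∈ s, Measurable f) (hdir : ∀ f ∈ s, ∀ g ∈ s, ∃ h ∈ s, f ⊔ g ≤ᵐ[μ] h) :
    ∃ fs : ℕ → Ω → ℝ, (∀ n, fs n ∈ s) ∧ (∀ᵐ ω ∂μ, Monotone fun n => fs n ω) ∧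
      Tendsto (fun n => arctanIntegral μ (fs n)) atTop (𝓝 (sSup (arctanIntegral μ '' s))) := by
  set c := sSup (arctanIntegral μ '' s)
  have happrox : ∀ n : ℕ, ∃ g ∈ s, c - 1 / (n + 1) < arctanIntegral μ g := fun n => by
    obtain ⟨_, ⟨g, hg, rfl⟩, hlt⟩ :=
      exists_lt_of_lt_csSup (hne.image _) (sub_lt_self c Nat.one_div_pos_of_nat)
    exact ⟨g, hg, hlt⟩
  choose gs hgs_mem hgs_lt using happrox
  choose! up hup_mem hup_le using hdir
  -- `fs n` dominates `gs 0, …, gs n` almost everywhere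
  let fs : ℕ → Ω → ℝ := fun n => Nat.rec (gs 0) (fun k f => up (gs (k + 1)) f) n
  have hfs_mem : ∀ n, fs n ∈ s := fun n => by
    induction n with
    | zero => exact hgs_mem 0
    | succ k ih => exact hup_mem _ (hgs_mem _) _ ih
  have hfs_succ : ∀ n, gs (n + 1) ⊔ fs n ≤ᵐ[μ] fs (n + 1) :=
    fun n => hup_le _ (hgs_mem _) _ (hfs_mem n)
  have hgs_le : ∀ n, gs n ≤ᵐ[μ] fs n := by
    rintro (_ | n)
    · exact EventuallyLE.rfl
    · exact (hfs_succ n).mono fun _ h => le_sup_left.trans h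
  refine ⟨fs, hfs_mem, ?_, ?_⟩
  · filter_upwards [ae_all_iff.2 hfs_succ] with ω h
    exact monotone_nat_of_le_succ fun n => le_sup_right.trans (h n)
  · refine tendsto_of_tendsto_of_tendsto_of_le_of_le (g := fun n : ℕ => c - 1 / (n + 1))
      ?_ tendsto_const_nhds (fun n => ?_)
      (fun n => le_csSup (bddAbove_arctanIntegral_image hmeas) ⟨_, hfs_mem n, rfl⟩)
    · simpa using tendsto_const_nhds.sub (tendsto_one_div_add_atTop_nhds_zero_nat (𝕜 := ℝ))
    · exact (hgs_lt n).le.trans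
        (arctanIntegral_mono (hmeas _ (hgs_mem n)) (hmeas _ (hfs_mem n)) (hgs_le n))

theorem exists_monotone_seq_ae_le_iSup {s : Set (Ω → ℝ)} (hne : s.Nonempty)
    (hmeas : ∀ f ∈ s, Measurable f) (hdir : ∀ f ∈ s, ∀ g ∈ s, ∃ h ∈ s, f ⊔ g ≤ᵐ[μ] h)
    {u : Ω → ℝ} (hu : ∀ f ∈ s, f ≤ᵐ[μ] u) :
    ∃ fs : ℕ → Ω → ℝ, (∀ n, fs n ∈ s) ∧ (∀ᵐ ω ∂μ, Monotone fun n => fs n ω) ∧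
      ∀ g ∈ s, g ≤ᵐ[μ] fun ω => ⨆ n, fs n ω := by
  obtain ⟨fs, hfs_mem, hmono, hlim⟩ :=
    exists_monotone_seq_tendsto_sSup_arctanIntegral (μ := μ) hne hmeas hdir
  set F : Ω → ℝ := fun ω => ⨆ n, fs n ω
  have hF_meas : Measurable F := Measurable.iSup fun n => hmeas _ (hfs_mem n)
  have hfs_F : ∀ᵐ ω ∂μ, Tendsto (fun n => fs n ω) atTop (𝓝 (F ω)) := by
    filter_upwards [hmono, ae_all_iff.2 fun n => hu _ (hfs_mem n)] with ω hm hbdd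
    exact tendsto_atTop_ciSup hm ⟨u ω, forall_mem_range.2 hbdd⟩
  have hJF := tendsto_nhds_unique (tendsto_arctanIntegral (fun n => hmeas _ (hfs_mem n)) hfs_F)
    hlim
  refine ⟨fs, hfs_mem, hmono, fun g hg => ae_le_of_arctanIntegral_sup_le hF_meas (hmeas g hg) ?_⟩
  rw [hJF]
  refine le_of_tendsto (tendsto_arctanIntegral (fun n => (hmeas g hg).sup (hmeas _ (hfs_mem n)))
    (hfs_F.mono fun _ h => tendsto_const_nhds.max h)) (Eventually.of_forall fun n => ?_)
  obtain ⟨h, hh, hle⟩ := hdir g hg _ (hfs_mem n)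
  exact (arctanIntegral_mono ((hmeas g hg).sup (hmeas _ (hfs_mem n))) (hmeas h hh) hle).trans
    (le_csSup (bddAbove_arctanIntegral_image hmeas) ⟨h, hh, rfl⟩)

theorem exists_seq_iInf_ae_le {s : Set (Ω → ℝ)} (hne : s.Nonempty)
    (hmeas : ∀ f ∈ s, Measurable f) (hdir : ∀ f ∈ s, ∀ g ∈ s, ∃ h ∈ s, h ≤ᵐ[μ] f ⊓ g)
    {u : Ω → ℝ} (hu : ∀ f ∈ s, u ≤ᵐ[μ] f) :
    ∃ fs : ℕ → Ω → ℝ, (∀ n, fs n ∈ s) ∧ ∀ g ∈ s, (fun ω => ⨅ n, fs n ω) ≤ᵐ[μ] g := by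
  obtain ⟨fs, hfs_mem, -, hle⟩ := exists_monotone_seq_ae_le_iSup (μ := μ)
    (s := {f | -f ∈ s}) (u := -u) (let ⟨f, hf⟩ := hne; ⟨-f, by simpa using hf⟩)
    (fun f hf => by simpa using (hmeas _ hf).neg)
    (fun f hf g hg => by
      obtain ⟨h, hh, hle⟩ := hdir _ hf _ hg
      refine ⟨-h, by simpa using hh, hle.mono fun ω hω => ?_⟩
      simp only [Pi.inf_apply, Pi.neg_apply, le_inf_iff] at hω
      exact sup_le (le_neg.1 hω.1) (le_neg.1 hω.2))
    (fun f hf => (hu _ hf).mono fun _ h => le_neg.1 h)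
  refine ⟨fun n => -fs n, hfs_mem, fun g hg => ?_⟩
  filter_upwards [hle (-g) (by simpa using hg), ae_all_iff.2 fun n => hu _ (hfs_mem n)]
    with ω hgω hbdd
  have : ⨆ n, fs n ω ≤ -⨅ n, -fs n ω :=
    ciSup_le fun n => le_neg.1 (ciInf_le ⟨u ω, forall_mem_range.2 hbdd⟩ n)
  show ⨅ n, -fs n ω ≤ g ω
  simp only [Pi.neg_apply] at hgω
  linarith

end DirectedFamily
section StoppingTimes

variable {θ τ σ ρ : Ω → ℝ}

lemma stop0_const {c : ℝ} (h0 : 0 ≤ c) (hc : c ≤ T) : Stop0 ℱ T (fun _ => c) :=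
  ⟨isStoppingTime_const ℱ c, fun _ => h0, fun _ => hc⟩

lemma Stop0.isStopIn_self (hθ : Stop0 ℱ T θ) : IsStopIn ℱ T θ θ :=
  ⟨hθ.1, fun _ => le_rfl, hθ.2.2⟩

lemma isStopIn_const (hθ : ∀ ω, θ ω ≤ T) : IsStopIn ℱ T θ (fun _ => T) :=
  ⟨isStoppingTime_const ℱ T, hθ, fun _ => le_rfl⟩

lemma IsStopIn.mono_left {θ' : Ω → ℝ} (h : IsStopIn ℱ T θ' τ) (hθ : ∀ ω, θ ω ≤ θ' ω) :
    IsStopIn ℱ T θ τ :=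
  ⟨h.1, fun ω => (hθ ω).trans (h.2.1 ω), h.2.2⟩

lemma IsStopIn.stop0 (h : IsStopIn ℱ T θ τ) (hθ : Stop0 ℱ T θ) : Stop0 ℱ T τ :=
  h.mono_left hθ.2.1

lemma IsStopIn.min (hτ : IsStopIn ℱ T θ τ) (hσ : IsStopIn ℱ T θ σ) :
    IsStopIn ℱ T θ (fun ω => min (τ ω) (σ ω)) :=
  ⟨by simpa only [WithTop.coe_min] using hτ.1.min hσ.1, fun ω => le_min (hτ.2.1 ω) (hσ.2.1 ω),
    fun ω => (min_le_left _ _).trans (hτ.2.2 ω)⟩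

lemma Stop0.min (hτ : Stop0 ℱ T τ) (hσ : Stop0 ℱ T σ) : Stop0 ℱ T (fun ω => min (τ ω) (σ ω)) :=
  IsStopIn.min hτ hσ

lemma Stop0.isStopIn_max (hσ : Stop0 ℱ T σ) (hρ : Stop0 ℱ T ρ) :
    IsStopIn ℱ T σ (fun ω => max (ρ ω) (σ ω)) :=
  ⟨by simpa only [WithTop.coe_max] using hρ.1.max hσ.1, fun ω => le_max_right _ _,
    fun ω => max_le (hρ.2.2 ω) (hσ.2.2 ω)⟩

lemma measurable_of_isStoppingTime (hτ : IsStoppingTime ℱ fun ω => (τ ω : WithTop ℝ)) :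
    Measurable τ := by
  simpa using hτ.measurable'.untopD 0

lemma IsStopIn.measurableSet_inter_le (hθ : IsStoppingTime ℱ fun ω => (θ ω : WithTop ℝ))
    (hτ : IsStopIn ℱ T θ τ) {A : Set Ω} (hA : MeasurableSet[hθ.measurableSpace] A) (t : ℝ) :
    MeasurableSet[ℱ t] (A ∩ {ω | τ ω ≤ t}) := by
  simpa only [WithTop.coe_le_coe] using
    (hθ.measurableSpace_mono hτ.1 (fun ω => WithTop.coe_le_coe.2 (hτ.2.1 ω)) A hA).2 t

lemma IsStopIn.piecewise (hθ : IsStoppingTime ℱ fun ω => (θ ω : WithTop ℝ))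
    (hτ : IsStopIn ℱ T θ τ) (hρ : IsStopIn ℱ T θ ρ) {A : Set Ω}
    (hA : MeasurableSet[hθ.measurableSpace] A) : IsStopIn ℱ T θ (A.piecewise τ ρ) := by
  refine ⟨fun t => ?_, fun ω => ?_, fun ω => ?_⟩
  · have hset : {ω | ((A.piecewise τ ρ ω : ℝ) : WithTop ℝ) ≤ t} =
        (A ∩ {ω | τ ω ≤ t}) ∪ (Aᶜ ∩ {ω | ρ ω ≤ t}) := by
      ext ω
      by_cases hω : ω ∈ A <;> simp [hω]
    rw [hset]
    exact (hτ.measurableSet_inter_le hθ hA t).union (hρ.measurableSet_inter_le hθ hA.compl t)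
  · by_cases hω : ω ∈ A <;> simp [hω, hτ.2.1 ω, hρ.2.1 ω]
  · by_cases hω : ω ∈ A <;> simp [hω, hτ.2.2 ω, hρ.2.2 ω]

lemma measurableSet_eq_of_isStoppingTime (hτ : IsStoppingTime ℱ fun ω => (τ ω : WithTop ℝ))
    (hσ : IsStoppingTime ℱ fun ω => (σ ω : WithTop ℝ)) :
    MeasurableSet[hτ.measurableSpace] {ω | τ ω = σ ω} := by
  simpa only [WithTop.coe_inj] using IsStoppingTime.measurableSet_eq_stopping_time hτ hσ

lemma measurableSet_inter_of_eqOn (hτ : IsStoppingTime ℱ fun ω => (τ ω : WithTop ℝ))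
    (hσ : IsStoppingTime ℱ fun ω => (σ ω : WithTop ℝ)) {A B : Set Ω}
    (hA : MeasurableSet[hσ.measurableSpace] A) (hB : MeasurableSet[hτ.measurableSpace] B)
    (heq : ∀ ω ∈ A, τ ω = σ ω) : MeasurableSet[hσ.measurableSpace] (B ∩ A) := by
  refine ⟨hB.1.inter hA.1, fun t => ?_⟩
  have hset : B ∩ A ∩ {ω | (σ ω : WithTop ℝ) ≤ t} =
      (B ∩ {ω | (τ ω : WithTop ℝ) ≤ t}) ∩ (A ∩ {ω | (σ ω : WithTop ℝ) ≤ t}) := by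
    ext ω
    simp only [mem_inter_iff, mem_ofPred_eq]
    constructor
    · rintro ⟨⟨hBω, hAω⟩, hσt⟩
      exact ⟨⟨hBω, by rwa [heq ω hAω]⟩, hAω, hσt⟩
    · rintro ⟨⟨hBω, -⟩, hAω, hσt⟩
      exact ⟨⟨hBω, hAω⟩, hσt⟩
  rw [hset]
  exact (hB.2 t).inter (hA.2 t)

lemma measurable_indicator_of_eqOn (hτ : IsStoppingTime ℱ fun ω => (τ ω : WithTop ℝ))
    (hσ : IsStoppingTime ℱ fun ω => (σ ω : WithTop ℝ)) {A : Set Ω}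
    (hA : MeasurableSet[hσ.measurableSpace] A) (heq : ∀ ω ∈ A, τ ω = σ ω) {f : Ω → ℝ}
    (hf : Measurable[hτ.measurableSpace] f) : Measurable[hσ.measurableSpace] (A.indicator f) := by
  intro B hB
  rw [Set.indicator_preimage, Set.ite]
  exact (measurableSet_inter_of_eqOn hτ hσ hA (hf hB) heq).union
    ((measurable_const (a := (0 : ℝ)) hB).diff hA)

lemma RightContinuousFiltration.isRightContinuous (h : RightContinuousFiltration ℱ) :
    ℱ.IsRightContinuous :=
  ⟨fun t => by rw [Filtration.rightCont_eq, h t]; rfl⟩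

lemma isStoppingTime_ciInf [ℱ.IsRightContinuous] {τs : ℕ → Ω → ℝ}
    (hτs : ∀ n, IsStoppingTime ℱ fun ω => (τs n ω : WithTop ℝ))
    (hbdd : ∀ ω, BddBelow (range fun n => τs n ω)) :
    IsStoppingTime ℱ fun ω => ((⨅ n, τs n ω : ℝ) : WithTop ℝ) := by
  refine isStoppingTime_of_measurableSet_lt_of_isRightContinuous fun t => ?_
  have hset : {ω | ((⨅ n, τs n ω : ℝ) : WithTop ℝ) < t} =
      ⋃ n, {ω | (τs n ω : WithTop ℝ) < t} := by
    ext ω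
    simp [ciInf_lt_iff (hbdd ω)]
  rw [hset]
  exact MeasurableSet.iUnion fun n => (hτs n).measurableSet_lt t

lemma isStoppingTime_of_ae_eq (hcf : CompleteFiltration μ ℱ)
    (hσ : IsStoppingTime ℱ fun ω => (σ ω : WithTop ℝ)) (hτσ : τ =ᵐ[μ] σ) :
    IsStoppingTime ℱ fun ω => (τ ω : WithTop ℝ) := by
  intro t
  set N := {ω | ¬τ ω = σ ω}
  have hN : μ N = 0 := ae_iff.1 hτσ
  have hset : {ω | (τ ω : WithTop ℝ) ≤ t} =
      ({ω | (σ ω : WithTop ℝ) ≤ t} \ N) ∪ ({ω | (τ ω : WithTop ℝ) ≤ t} ∩ N) := by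
    ext ω
    by_cases hω : τ ω = σ ω <;> simp [N, hω]
  rw [hset]
  exact ((hσ t).diff (hcf N hN t)).union (hcf _ (measure_mono_null inter_subset_right hN) t)

end StoppingTimes
namespace FExp

variable {𝔈 : FExp μ T ℱ} {τ σ ν : Ω → ℝ} {ξ η : Ω → ℝ}

/-- `Dom⁺(E)`. -/
def DomPos (𝔈 : FExp μ T ℱ) : Set (Ω → ℝ) := {ξ | ξ ∈ 𝔈.Dom ∧ 0 ≤ᵐ[μ] ξ}

section Domain

lemma mem_domPos_of_le (hξ : ξ ∈ 𝔈.DomPos) (h0 : 0 ≤ᵐ[μ] η) (hle : η ≤ᵐ[μ] ξ) :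
    η ∈ 𝔈.DomPos :=
  ⟨𝔈.sandwich_mem hξ.1 (h0.and hle), h0⟩

lemma mem_domPos_of_ae_eq (hξ : ξ ∈ 𝔈.DomPos) (h : η =ᵐ[μ] ξ) : η ∈ 𝔈.DomPos :=
  mem_domPos_of_le hξ (hξ.2.trans h.symm.le) h.le

lemma const_mem_domPos {c : ℝ} (hc : 0 ≤ c) : (fun _ => c) ∈ 𝔈.DomPos :=
  ⟨𝔈.const_mem c, Eventually.of_forall fun _ => hc⟩

lemma add_mem_domPos (hξ : ξ ∈ 𝔈.DomPos) (hη : η ∈ 𝔈.DomPos) : ξ + η ∈ 𝔈.DomPos :=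
  ⟨𝔈.add_mem hξ.1 hη.1, by filter_upwards [hξ.2, hη.2] with ω h₁ h₂ using add_nonneg h₁ h₂⟩

lemma indicator_mem_domPos (hξ : ξ ∈ 𝔈.DomPos) {A : Set Ω} (hA : MeasurableSet A) :
    A.indicator ξ ∈ 𝔈.DomPos :=
  ⟨𝔈.indicator_mem hξ.1 hA,
    hξ.2.mono fun ω (h : 0 ≤ ξ ω) => by by_cases hω : ω ∈ A <;> simp [hω, h]⟩

lemma smul_mem_domPos (hξ : ξ ∈ 𝔈.DomPos) {c : ℝ} (hc : 0 ≤ c) :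
    (fun ω => c * ξ ω) ∈ 𝔈.DomPos := by
  have hnat : ∀ n : ℕ, (fun ω => (n : ℝ) * ξ ω) ∈ 𝔈.DomPos := by
    intro n
    induction n with
    | zero => simpa using const_mem_domPos (𝔈 := 𝔈) le_rfl
    | succ n ih =>
      convert add_mem_domPos ih hξ using 1
      ext ω
      simp [add_mul]
  exact mem_domPos_of_le (hnat ⌈c⌉₊) (hξ.2.mono fun _ h => mul_nonneg hc h)
    (hξ.2.mono fun _ h => mul_le_mul_of_nonneg_right (Nat.le_ceil c) h)

end Domain

section Conditional

lemma cond_mem_domPos (hτ : Stop0 ℱ T τ) (hξ : ξ ∈ 𝔈.DomPos) : 𝔈.cond τ ξ ∈ 𝔈.DomPos :=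
  ⟨𝔈.cond_mem hτ hξ.1 hξ.2, 𝔈.cond_nonneg hτ hξ.1 hξ.2⟩

lemma cond_mono (hτ : Stop0 ℱ T τ) (hξ : ξ ∈ 𝔈.DomPos) (hη : η ∈ 𝔈.DomPos) (h : ξ ≤ᵐ[μ] η) :
    𝔈.cond τ ξ ≤ᵐ[μ] 𝔈.cond τ η :=
  𝔈.mono hτ hξ.1 hξ.2 hη.1 hη.2 h

lemma cond_congr (hτ : Stop0 ℱ T τ) (hξ : ξ ∈ 𝔈.DomPos) (hη : η ∈ 𝔈.DomPos) (h : ξ =ᵐ[μ] η) :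
    𝔈.cond τ ξ =ᵐ[μ] 𝔈.cond τ η :=
  (cond_mono hτ hξ hη h.le).antisymm (cond_mono hτ hη hξ h.symm.le)

lemma cond_zero (hτ : Stop0 ℱ T τ) : 𝔈.cond τ (fun _ => 0) =ᵐ[μ] fun _ => 0 := by
  simpa using 𝔈.zero_one hτ 𝔈.zero_mem (Eventually.of_forall fun _ => le_rfl)
    (@MeasurableSet.empty _ hτ.1.measurableSpace)

lemma cond_of_measurable (hτ : Stop0 ℱ T τ) (hξ : ξ ∈ 𝔈.DomPos)
    (hm : Measurable[hτ.1.measurableSpace] ξ) : 𝔈.cond τ ξ =ᵐ[μ] ξ := by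
  have h := 𝔈.translation hτ 𝔈.zero_mem (Eventually.of_forall fun _ => le_rfl) hξ.1 hξ.2 hm
  rw [show (fun _ => (0 : ℝ)) + ξ = ξ from zero_add ξ] at h
  filter_upwards [h, cond_zero hτ] with ω h₁ h₂
  rw [h₁, Pi.add_apply, h₂, zero_add]

lemma indicator_cond_congr (hτ : Stop0 ℱ T τ) (hξ : ξ ∈ 𝔈.DomPos) (hη : η ∈ 𝔈.DomPos)
    {A : Set Ω} (hA : MeasurableSet[hτ.1.measurableSpace] A)
    (h : A.indicator ξ =ᵐ[μ] A.indicator η) :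
    A.indicator (𝔈.cond τ ξ) =ᵐ[μ] A.indicator (𝔈.cond τ η) := by
  have hA' := hτ.1.measurableSpace_le A hA
  calc A.indicator (𝔈.cond τ ξ) =ᵐ[μ] 𝔈.cond τ (A.indicator ξ) :=
        (𝔈.zero_one hτ hξ.1 hξ.2 hA).symm
    _ =ᵐ[μ] 𝔈.cond τ (A.indicator η) :=
        cond_congr hτ (indicator_mem_domPos hξ hA') (indicator_mem_domPos hη hA') h
    _ =ᵐ[μ] A.indicator (𝔈.cond τ η) := 𝔈.zero_one hτ hη.1 hη.2 hA

lemma indicator_cond_eq_of_le (hν : Stop0 ℱ T ν) (hτ : Stop0 ℱ T τ) (hle : ∀ ω, ν ω ≤ τ ω)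
    {A : Set Ω} (hA : MeasurableSet[hν.1.measurableSpace] A) (heq : ∀ ω ∈ A, τ ω = ν ω)
    (hξ : ξ ∈ 𝔈.DomPos) : A.indicator (𝔈.cond τ ξ) =ᵐ[μ] A.indicator (𝔈.cond ν ξ) := by
  have hAτ := hν.1.measurableSpace_mono hτ.1 (fun ω => WithTop.coe_le_coe.2 (hle ω)) A hA
  have hA' := hν.1.measurableSpace_le A hA
  have hξA := indicator_mem_domPos hξ hA'
  -- `1_A E_τ[ξ]` is already `F_ν`-measurable
  calc A.indicator (𝔈.cond τ ξ) =ᵐ[μ] 𝔈.cond ν (A.indicator (𝔈.cond τ ξ)) :=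
        (cond_of_measurable hν (indicator_mem_domPos (cond_mem_domPos hτ hξ) hA')
          (measurable_indicator_of_eqOn hτ.1 hν.1 hA heq (𝔈.cond_adapted hτ hξ.1 hξ.2))).symm
    _ =ᵐ[μ] 𝔈.cond ν (𝔈.cond τ (A.indicator ξ)) :=
        cond_congr hν (indicator_mem_domPos (cond_mem_domPos hτ hξ) hA')
          (cond_mem_domPos hτ hξA) (𝔈.zero_one hτ hξ.1 hξ.2 hAτ).symm
    _ =ᵐ[μ] 𝔈.cond ν (A.indicator ξ) := 𝔈.time_consistent hν hτ hle hξA.1 hξA.2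
    _ =ᵐ[μ] A.indicator (𝔈.cond ν ξ) := 𝔈.zero_one hν hξ.1 hξ.2 hA

lemma indicator_cond_eq_of_eqOn (hτ : Stop0 ℱ T τ) (hσ : Stop0 ℱ T σ) {A : Set Ω}
    (hAτ : MeasurableSet[hτ.1.measurableSpace] A) (hAσ : MeasurableSet[hσ.1.measurableSpace] A)
    (heq : ∀ ω ∈ A, τ ω = σ ω) (hξ : ξ ∈ 𝔈.DomPos) :
    A.indicator (𝔈.cond τ ξ) =ᵐ[μ] A.indicator (𝔈.cond σ ξ) := by
  have hν := hτ.min hσ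
  have hA : MeasurableSet[hν.1.measurableSpace] A :=
    (hτ.1.measurableSet_min_iff hσ.1 A).2 ⟨hAτ, hAσ⟩
  exact (indicator_cond_eq_of_le hν hτ (fun _ => min_le_left _ _) hA
    (fun ω hω => by simp [heq ω hω]) hξ).trans
    (indicator_cond_eq_of_le hν hσ (fun _ => min_le_right _ _) hA
      (fun ω hω => by simp [heq ω hω]) hξ).symm

lemma cond_smul_add_le (h6 : 𝔈.Subadditive) (h7 : 𝔈.PosHom) (hτ : Stop0 ℱ T τ)
    (hξ : ξ ∈ 𝔈.DomPos) (hη : η ∈ 𝔈.DomPos) {a b : ℝ} (ha : 0 ≤ a) (hb : 0 ≤ b) :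
    𝔈.cond τ (fun ω => a * ξ ω + b * η ω) ≤ᵐ[μ]
      fun ω => a * 𝔈.cond τ ξ ω + b * 𝔈.cond τ η ω := by
  have haξ := smul_mem_domPos hξ ha
  have hbη := smul_mem_domPos hη hb
  filter_upwards [h6 hτ haξ.1 haξ.2 hbη.1 hbη.2, h7 a ha hτ hξ.1 hξ.2, h7 b hb hτ hη.1 hη.2]
    with ω hadd ha hb
  change 𝔈.cond τ ((fun ω => a * ξ ω) + fun ω => b * η ω) ω ≤ _
  simpa only [Pi.add_apply, ha, hb] using hadd

end Conditional

section Expectation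

lemma ae_eq_of_le_of_E0_eq (hT : 0 ≤ T) (hξ : ξ ∈ 𝔈.DomPos) (hη : η ∈ 𝔈.DomPos)
    (hle : ξ ≤ᵐ[μ] η) (h : 𝔈.E0 ξ = 𝔈.E0 η) : ξ =ᵐ[μ] η :=
  𝔈.strict_mono (stop0_const le_rfl hT) hξ.1 hξ.2 hη.1 hη.2 hle <|
    (𝔈.E0_eq hξ.1 hξ.2).trans (h ▸ (𝔈.E0_eq hη.1 hη.2).symm)

variable [NeZero μ]

lemma E0_mono (hT : 0 ≤ T) (hξ : ξ ∈ 𝔈.DomPos) (hη : η ∈ 𝔈.DomPos) (h : ξ ≤ᵐ[μ] η) :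
    𝔈.E0 ξ ≤ 𝔈.E0 η :=
  (eventually_const (f := ae μ)).1 <| (𝔈.E0_eq hξ.1 hξ.2).symm.le.trans <|
    (cond_mono (stop0_const le_rfl hT) hξ hη h).trans (𝔈.E0_eq hη.1 hη.2).le

lemma E0_cond (hT : 0 ≤ T) (hτ : Stop0 ℱ T τ) (hξ : ξ ∈ 𝔈.DomPos) :
    𝔈.E0 (𝔈.cond τ ξ) = 𝔈.E0 ξ := by
  have hτξ := cond_mem_domPos hτ hξ
  exact (eventually_const (f := ae μ)).1 <| (𝔈.E0_eq hτξ.1 hτξ.2).symm.trans <|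
    (𝔈.time_consistent (stop0_const le_rfl hT) hτ hτ.2.1 hξ.1 hξ.2).trans (𝔈.E0_eq hξ.1 hξ.2)

lemma E0_add_const (hT : 0 ≤ T) (hξ : ξ ∈ 𝔈.DomPos) {c : ℝ} (hc : 0 ≤ c) :
    𝔈.E0 (ξ + fun _ => c) = 𝔈.E0 ξ + c := by
  have hξc := add_mem_domPos hξ (const_mem_domPos (𝔈 := 𝔈) hc)
  have htr := 𝔈.translation (stop0_const le_rfl hT) hξ.1 hξ.2 (𝔈.const_mem c)
    (Eventually.of_forall fun _ => hc) measurable_const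
  refine (eventually_const (f := ae μ)).1 ?_
  filter_upwards [𝔈.E0_eq hξc.1 hξc.2, htr, 𝔈.E0_eq hξ.1 hξ.2] with ω h₁ h₂ h₃
  simp only [Pi.add_apply] at h₂
  rw [← h₁, h₂, h₃]

end Expectation

end FExp
namespace FExp

variable {𝔈 : FExp μ T ℱ} {τ : Ω → ℝ} {ξ : Ω → ℝ} {ξs : ℕ → Ω → ℝ}

section MonotoneConvergence

variable [NeZero μ]

/-- By (H1): `ξ` restricted to the set where some `ξₖ`, `k ≤ n`, is `ε`-close to the limit stays
below `ξₙ + ε`, and these sets exhaust `Ω`. -/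
theorem E0_tendsto_of_monotone (hT : 0 ≤ T) (hξs : ∀ n, ξs n ∈ 𝔈.DomPos)
    (hξs_meas : ∀ n, Measurable (ξs n)) (hξ : ξ ∈ 𝔈.DomPos)
    (hmono : ∀ᵐ ω ∂μ, Monotone fun n => ξs n ω)
    (hlim : ∀ᵐ ω ∂μ, Tendsto (fun n => ξs n ω) atTop (𝓝 (ξ ω))) :
    Tendsto (fun n => 𝔈.E0 (ξs n)) atTop (𝓝 (𝔈.E0 ξ)) := by
  have hle : ∀ n, ξs n ≤ᵐ[μ] ξ := fun n =>
    (hmono.and hlim).mono fun _ h => h.1.ge_of_tendsto h.2 n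
  refine tendsto_order.2 ⟨fun a ha => ?_, fun b hb =>
    Eventually.of_forall fun n => (E0_mono hT (hξs n) hξ (hle n)).trans_lt hb⟩
  obtain ⟨ε, hε, hεa⟩ : ∃ ε > 0, a < 𝔈.E0 ξ - 2 * ε :=
    ⟨(𝔈.E0 ξ - a) / 4, by linarith, by linarith⟩
  set A : ℕ → Set Ω := fun n => ⋃ k ≤ n, ⋂ j, {ω | ξs j ω ≤ ξs k ω + ε}
  have hA_meas : ∀ n, MeasurableSet (A n) := fun n =>
    MeasurableSet.biUnion (to_countable _) fun k _ => MeasurableSet.iInter fun j =>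
      measurableSet_le (hξs_meas j) ((hξs_meas k).add_const ε)
  have hA_mono : Monotone A := fun n n' hn => biUnion_mono (fun k hk => le_trans hk hn)
    fun _ _ => subset_rfl
  have hA_cover : ∀ᵐ ω ∂μ, ω ∈ ⋃ n, A n := by
    filter_upwards [hmono, hlim] with ω hm hl
    obtain ⟨k, hk⟩ := (hl.eventually (lt_mem_nhds (sub_lt_self (ξ ω) hε))).exists
    exact mem_iUnion.2 ⟨k, mem_iUnion₂.2 ⟨k, le_rfl, mem_iInter.2 fun j => by
      have := hm.ge_of_tendsto hl j
      simp only [mem_ofPred_eq]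
      linarith⟩⟩
  have hA_le : ∀ n, (A n).indicator ξ ≤ᵐ[μ] ξs n + fun _ => ε := fun n => by
    filter_upwards [hmono, hlim, (hξs n).2] with ω hm hl (h0 : 0 ≤ ξs n ω)
    by_cases hω : ω ∈ A n
    · obtain ⟨k, hk, hkω⟩ := mem_iUnion₂.1 hω
      have hξk : ξ ω ≤ ξs k ω + ε := le_of_tendsto' hl fun j => mem_iInter.1 hkω j
      rw [indicator_of_mem hω, Pi.add_apply]
      linarith [hm hk]
    · rw [indicator_of_notMem hω, Pi.add_apply]
      linarith
  filter_upwards [(𝔈.h1 hξ.1 hξ.2 hA_meas hA_mono hA_cover).eventually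
    (lt_mem_nhds (sub_lt_self _ hε))] with n hn
  have := E0_mono hT (indicator_mem_domPos hξ (hA_meas n))
    (add_mem_domPos (hξs n) (const_mem_domPos hε.le)) (hA_le n)
  rw [E0_add_const hT (hξs n) hε.le] at this
  linarith

/-- The limit of `E_τ[ξₙ]` lies in `Dom⁺(E)` by (H5), is below `E_τ[ξ]`, and has the same
`E`-expectation, so strict monotonicity forces equality. -/
theorem cond_tendsto_of_monotone (hT : 0 ≤ T) (hτ : Stop0 ℱ T τ) (hξs : ∀ n, ξs n ∈ 𝔈.DomPos)
    (hξs_meas : ∀ n, Measurable (ξs n)) (hξ : ξ ∈ 𝔈.DomPos)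
    (hmono : ∀ᵐ ω ∂μ, Monotone fun n => ξs n ω)
    (hlim : ∀ᵐ ω ∂μ, Tendsto (fun n => ξs n ω) atTop (𝓝 (ξ ω))) :
    ∀ᵐ ω ∂μ, Tendsto (fun n => 𝔈.cond τ (ξs n) ω) atTop (𝓝 (𝔈.cond τ ξ ω)) := by
  have hle : ∀ n, ξs n ≤ᵐ[μ] ξ := fun n =>
    (hmono.and hlim).mono fun _ h => h.1.ge_of_tendsto h.2 n
  have hcond := fun n => cond_mem_domPos hτ (hξs n)
  have hcmono : ∀ᵐ ω ∂μ, Monotone fun n => 𝔈.cond τ (ξs n) ω := by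
    filter_upwards [ae_all_iff.2 fun n => cond_mono hτ (hξs n) (hξs (n + 1))
      (hmono.mono fun _ h => h n.le_succ)] with ω h
    exact monotone_nat_of_le_succ h
  have hcle : ∀ᵐ ω ∂μ, ∀ n, 𝔈.cond τ (ξs n) ω ≤ 𝔈.cond τ ξ ω :=
    ae_all_iff.2 fun n => cond_mono hτ (hξs n) hξ (hle n)
  set Y : Ω → ℝ := fun ω => ⨆ n, 𝔈.cond τ (ξs n) ω
  have hY_lim : ∀ᵐ ω ∂μ, Tendsto (fun n => 𝔈.cond τ (ξs n) ω) atTop (𝓝 (Y ω)) := by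
    filter_upwards [hcmono, hcle] with ω hm hb
    exact tendsto_atTop_ciSup hm ⟨_, forall_mem_range.2 hb⟩
  have hY_le : Y ≤ᵐ[μ] 𝔈.cond τ ξ := by
    filter_upwards [hcle] with ω hb
    exact ciSup_le hb
  have hY : Y ∈ 𝔈.DomPos := by
    refine ⟨𝔈.h5 (fun n => (hcond n).1) (fun n => (hcond n).2) hY_lim
      ⟨𝔈.E0 ξ, Eventually.frequently (Eventually.of_forall fun n => ?_)⟩, ?_⟩
    · rw [E0_cond hT hτ (hξs n)]
      exact E0_mono hT (hξs n) hξ (hle n)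
    · filter_upwards [hY_lim, ae_all_iff.2 fun n => (hcond n).2] with ω hl h0
      exact ge_of_tendsto' hl h0
  have hE0 : 𝔈.E0 Y = 𝔈.E0 (𝔈.cond τ ξ) := by
    refine le_antisymm (E0_mono hT hY (cond_mem_domPos hτ hξ) hY_le) ?_
    rw [E0_cond hT hτ hξ]
    refine le_of_tendsto (E0_tendsto_of_monotone hT hξs hξs_meas hξ hmono hlim)
      (Eventually.of_forall fun n => ?_)
    rw [← E0_cond hT hτ (hξs n)]
    exact E0_mono hT (hcond n) hY ((hcmono.and hY_lim).mono fun _ h => h.1.ge_of_tendsto h.2 n)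
  filter_upwards [hY_lim, ae_eq_of_le_of_E0_eq hT hY (cond_mem_domPos hτ hξ) hY_le hE0]
    with ω h₁ h₂
  rwa [← h₂]

end MonotoneConvergence

end FExp
lemma indicator_ae_eq_of_eqOn {τ σ f g : Ω → ℝ} (h : ∀ᵐ ω ∂μ, τ ω = σ ω → f ω = g ω)
    {A : Set Ω} (hA : ∀ ω ∈ A, τ ω = σ ω) : A.indicator f =ᵐ[μ] A.indicator g :=
  h.mono fun ω hω => by
    by_cases hωA : ω ∈ A
    · simp [hωA, hω (hA ω hωA)]
    · simp [hωA]

section ValueFunction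

open FExp

variable {𝔈 : FExp μ T ℱ} {X v : (Ω → ℝ) → Ω → ℝ} {θ τ σ ρ : Ω → ℝ}

lemma Admissible.mem_domPos (hX : Admissible 𝔈 X) (hτ : Stop0 ℱ T τ) : X τ ∈ 𝔈.DomPos :=
  ⟨(hX.1 τ hτ).1, (hX.1 τ hτ).2.1⟩

lemma Admissible.measurable (hX : Admissible 𝔈 X) (hτ : Stop0 ℱ T τ) :
    Measurable[hτ.1.measurableSpace] (X τ) :=
  (hX.1 τ hτ).2.2

lemma Admissible.exists_cond_eq_max (hX : Admissible 𝔈 X) (hθ : Stop0 ℱ T θ)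
    (hρ : IsStopIn ℱ T θ ρ) (hτ : IsStopIn ℱ T θ τ) :
    ∃ σ, IsStopIn ℱ T θ σ ∧
      𝔈.cond θ (X σ) =ᵐ[μ] fun ω => max (𝔈.cond θ (X ρ) ω) (𝔈.cond θ (X τ) ω) := by
  have hρ0 := hρ.stop0 hθ
  have hτ0 := hτ.stop0 hθ
  set A := {ω | 𝔈.cond θ (X τ) ω ≤ 𝔈.cond θ (X ρ) ω}
  have hA : MeasurableSet[hθ.1.measurableSpace] A :=
    measurableSet_le (𝔈.cond_adapted hθ (hX.mem_domPos hτ0).1 (hX.mem_domPos hτ0).2)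
      (𝔈.cond_adapted hθ (hX.mem_domPos hρ0).1 (hX.mem_domPos hρ0).2)
  have hσ := hρ.piecewise hθ.1 hτ hA
  have hσ0 := hσ.stop0 hθ
  have hA_ρ : A.indicator (𝔈.cond θ (X (A.piecewise ρ τ))) =ᵐ[μ] A.indicator (𝔈.cond θ (X ρ)) :=
    indicator_cond_congr hθ (hX.mem_domPos hσ0) (hX.mem_domPos hρ0) hA
      (indicator_ae_eq_of_eqOn (hX.2 _ _ hσ0 hρ0) fun ω hω => piecewise_eq_of_mem _ _ _ hω)
  have hA_τ : Aᶜ.indicator (𝔈.cond θ (X (A.piecewise ρ τ))) =ᵐ[μ]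
      Aᶜ.indicator (𝔈.cond θ (X τ)) :=
    indicator_cond_congr hθ (hX.mem_domPos hσ0) (hX.mem_domPos hτ0) hA.compl
      (indicator_ae_eq_of_eqOn (hX.2 _ _ hσ0 hτ0) fun ω hω => piecewise_eq_of_notMem _ _ _ hω)
  refine ⟨_, hσ, ?_⟩
  filter_upwards [hA_ρ, hA_τ] with ω h₁ h₂
  by_cases hω : ω ∈ A
  · simp only [indicator_of_mem hω] at h₁
    rw [h₁, max_eq_left hω]
  · simp only [indicator_of_mem (mem_compl hω)] at h₂
    rw [h₂, max_eq_right (le_of_not_ge hω)]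

lemma X_le_value (hX : Admissible 𝔈 X) (hv : IsValueFam 𝔈 X v) (hθ : Stop0 ℱ T θ) :
    X θ ≤ᵐ[μ] v θ :=
  (cond_of_measurable hθ (hX.mem_domPos hθ) (hX.measurable hθ)).symm.le.trans
    ((hv θ hθ).1 _ ⟨θ, hθ.isStopIn_self, rfl⟩)

lemma value_terminal (hT : 0 ≤ T) (hX : Admissible 𝔈 X) (hv : IsValueFam 𝔈 X v) :
    v (fun _ => T) =ᵐ[μ] X (fun _ => T) := by
  have hT0 : Stop0 ℱ T (fun _ => T) := stop0_const hT le_rfl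
  have hle : v (fun _ => T) ≤ᵐ[μ] 𝔈.cond (fun _ => T) (X fun _ => T) := by
    refine (hv _ hT0).2 _ ?_
    rintro _ ⟨ρ, hρ, rfl⟩
    rw [show ρ = fun _ => T from funext fun ω => le_antisymm (hρ.2.2 ω) (hρ.2.1 ω)]
  exact (hle.trans (cond_of_measurable hT0 (hX.mem_domPos hT0) (hX.measurable hT0)).le).antisymm
    (X_le_value hX hv hT0)

/-- On `{τ = σ}`, every reward `E_τ[X(ρ)]`, `ρ ∈ S_τ`, is also the reward `E_σ[X(ρ ∨ σ)]`. -/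
lemma value_le_of_eq (hX : Admissible 𝔈 X) (hv : IsValueFam 𝔈 X v) (hτ : Stop0 ℱ T τ)
    (hσ : Stop0 ℱ T σ) : ∀ᵐ ω ∂μ, τ ω = σ ω → v τ ω ≤ v σ ω := by
  set A := {ω | τ ω = σ ω}
  have hAτ : MeasurableSet[hτ.1.measurableSpace] A := measurableSet_eq_of_isStoppingTime hτ.1 hσ.1
  have hAσ : MeasurableSet[hσ.1.measurableSpace] A := by
    simpa only [eq_comm] using measurableSet_eq_of_isStoppingTime hσ.1 hτ.1
  have key : ∀ ρ, IsStopIn ℱ T τ ρ → 𝔈.cond τ (X ρ) ≤ᵐ[μ] A.piecewise (v σ) (v τ) := by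
    intro ρ hρ
    have hρ0 := hρ.stop0 hτ
    have hρ' := hσ.isStopIn_max hρ0
    have hρ'0 := hρ'.stop0 hσ
    have hA_ρ : A.indicator (𝔈.cond τ (X ρ)) =ᵐ[μ]
        A.indicator (𝔈.cond σ (X fun ω => max (ρ ω) (σ ω))) :=
      (indicator_cond_congr hτ (hX.mem_domPos hρ0) (hX.mem_domPos hρ'0) hAτ
        (indicator_ae_eq_of_eqOn (hX.2 _ _ hρ0 hρ'0) fun ω (hω : τ ω = σ ω) =>
          (max_eq_left (hω ▸ hρ.2.1 ω)).symm)).trans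
      (indicator_cond_eq_of_eqOn hτ hσ hAτ hAσ (fun _ hω => hω) (hX.mem_domPos hρ'0))
    filter_upwards [hA_ρ, (hv σ hσ).1 _ ⟨_, hρ', rfl⟩, (hv τ hτ).1 _ ⟨ρ, hρ, rfl⟩]
      with ω h₁ h₂ h₃
    by_cases hω : ω ∈ A
    · simp only [indicator_of_mem hω] at h₁
      rw [piecewise_eq_of_mem _ _ _ hω, h₁]
      exact h₂
    · rw [piecewise_eq_of_notMem _ _ _ hω]
      exact h₃
  filter_upwards [(hv τ hτ).2 _ fun _ ⟨ρ, hρ, hg⟩ => hg ▸ key ρ hρ] with ω h hω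
  rwa [piecewise_eq_of_mem _ _ _ (show ω ∈ A from hω)] at h

lemma value_eq_of_eq (hX : Admissible 𝔈 X) (hv : IsValueFam 𝔈 X v) (hτ : Stop0 ℱ T τ)
    (hσ : Stop0 ℱ T σ) : ∀ᵐ ω ∂μ, τ ω = σ ω → v τ ω = v σ ω := by
  filter_upwards [value_le_of_eq hX hv hτ hσ, value_le_of_eq hX hv hσ hτ] with ω h₁ h₂ h
  exact le_antisymm (h₁ h) (h₂ h.symm)

variable [IsFiniteMeasure μ]

lemma exists_seq_tendsto_value (hX : Admissible 𝔈 X) (hv : IsValueFam 𝔈 X v)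
    (hθ : Stop0 ℱ T θ) :
    ∃ ρs : ℕ → Ω → ℝ, (∀ n, IsStopIn ℱ T θ (ρs n)) ∧
      ∀ᵐ ω ∂μ, Monotone (fun n => 𝔈.cond θ (X (ρs n)) ω) ∧
        Tendsto (fun n => 𝔈.cond θ (X (ρs n)) ω) atTop (𝓝 (v θ ω)) := by
  obtain ⟨gs, hgs, hmono, hle⟩ := exists_monotone_seq_ae_le_iSup (μ := μ)
    (s := {g | ∃ ρ, IsStopIn ℱ T θ ρ ∧ g = 𝔈.cond θ (X ρ)}) ⟨_, _, isStopIn_const hθ.2.2, rfl⟩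
    (by
      rintro _ ⟨ρ, hρ, rfl⟩
      have hXρ := hX.mem_domPos (hρ.stop0 hθ)
      exact (𝔈.cond_adapted hθ hXρ.1 hXρ.2).mono hθ.1.measurableSpace_le le_rfl)
    (by
      rintro _ ⟨ρ, hρ, rfl⟩ _ ⟨τ, hτ, rfl⟩
      obtain ⟨σ, hσ, heq⟩ := hX.exists_cond_eq_max hθ hρ hτ
      exact ⟨_, ⟨σ, hσ, rfl⟩, heq.symm.le⟩)
    (hv θ hθ).1
  choose ρs hρs hgs_eq using hgs
  obtain rfl : gs = fun n => 𝔈.cond θ (X (ρs n)) := funext hgs_eq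
  refine ⟨ρs, hρs, ?_⟩
  filter_upwards [hmono, (hv θ hθ).2 _ hle,
    ae_all_iff.2 fun n => (hv θ hθ).1 _ ⟨_, hρs n, rfl⟩] with ω hm hsup hb
  refine ⟨hm, ?_⟩
  convert tendsto_atTop_ciSup hm ⟨v θ ω, forall_mem_range.2 hb⟩
  exact le_antisymm hsup (ciSup_le hb)

variable [NeZero μ]

lemma value_mem_domPos (hT : 0 ≤ T) (hX : Admissible 𝔈 X) (hbdd : BddRewardE0 𝔈 X)
    (hv : IsValueFam 𝔈 X v) (hθ : Stop0 ℱ T θ) : v θ ∈ 𝔈.DomPos := by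
  obtain ⟨ρs, hρs, hconv⟩ := exists_seq_tendsto_value hX hv hθ
  obtain ⟨C, hC⟩ := hbdd
  have hXρ := fun n => hX.mem_domPos ((hρs n).stop0 hθ)
  have hcond := fun n => cond_mem_domPos hθ (hXρ n)
  refine ⟨𝔈.h5 (fun n => (hcond n).1) (fun n => (hcond n).2) (hconv.mono fun _ h => h.2)
    ⟨C, Eventually.frequently (Eventually.of_forall fun n => ?_)⟩, ?_⟩
  · rw [E0_cond hT hθ (hXρ n)]
    exact hC _ ((hρs n).stop0 hθ)
  · filter_upwards [hconv, (hcond 0).2] with ω h h₀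
    exact h₀.trans (h.1.ge_of_tendsto h.2 0)

lemma cond_value_self (hT : 0 ≤ T) (hX : Admissible 𝔈 X) (hbdd : BddRewardE0 𝔈 X)
    (hv : IsValueFam 𝔈 X v) (hθ : Stop0 ℱ T θ) : 𝔈.cond θ (v θ) =ᵐ[μ] v θ := by
  obtain ⟨ρs, hρs, hconv⟩ := exists_seq_tendsto_value hX hv hθ
  set η : Ω → ℝ := fun ω => ⨆ n, 𝔈.cond θ (X (ρs n)) ω
  have hη_meas : Measurable[hθ.1.measurableSpace] η := Measurable.iSup fun n =>
    𝔈.cond_adapted hθ (hX.mem_domPos ((hρs n).stop0 hθ)).1 (hX.mem_domPos ((hρs n).stop0 hθ)).2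
  have hη : η =ᵐ[μ] v θ := hconv.mono fun ω h => tendsto_nhds_unique
    (tendsto_atTop_ciSup h.1 ⟨v θ ω, forall_mem_range.2 fun n => h.1.ge_of_tendsto h.2 n⟩) h.2
  have hvθ := value_mem_domPos hT hX hbdd hv hθ
  have hηD := mem_domPos_of_ae_eq hvθ hη
  exact (cond_congr hθ hvθ hηD hη.symm).trans ((cond_of_measurable hθ hηD hη_meas).trans hη)

theorem cond_value_le (hT : 0 ≤ T) (hX : Admissible 𝔈 X) (hbdd : BddRewardE0 𝔈 X)
    (hv : IsValueFam 𝔈 X v) (hσ : Stop0 ℱ T σ) (hτ : Stop0 ℱ T τ) (hle : ∀ ω, σ ω ≤ τ ω) :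
    𝔈.cond σ (v τ) ≤ᵐ[μ] v σ := by
  obtain ⟨ρs, hρs, hconv⟩ := exists_seq_tendsto_value hX hv hτ
  have hXρ := fun n => hX.mem_domPos ((hρs n).stop0 hτ)
  have hlim := cond_tendsto_of_monotone hT hσ (fun n => cond_mem_domPos hτ (hXρ n))
    (fun n => (𝔈.cond_adapted hτ (hXρ n).1 (hXρ n).2).mono hτ.1.measurableSpace_le le_rfl)
    (value_mem_domPos hT hX hbdd hv hτ) (hconv.mono fun _ h => h.1) (hconv.mono fun _ h => h.2)
  have hbound : ∀ᵐ ω ∂μ, ∀ n, 𝔈.cond σ (𝔈.cond τ (X (ρs n))) ω ≤ v σ ω :=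
    ae_all_iff.2 fun n => (𝔈.time_consistent hσ hτ hle (hXρ n).1 (hXρ n).2).le.trans
      ((hv σ hσ).1 _ ⟨_, (hρs n).mono_left hle, rfl⟩)
  filter_upwards [hlim, hbound] with ω h hb
  exact le_of_tendsto' h hb

lemma cond_value_le_of_ae_le (hT : 0 ≤ T) (hX : Admissible 𝔈 X) (hbdd : BddRewardE0 𝔈 X)
    (hv : IsValueFam 𝔈 X v) {S q q' : Ω → ℝ} (hS : Stop0 ℱ T S) (hq : IsStopIn ℱ T S q)
    (hq' : IsStopIn ℱ T S q') (hqq' : q ≤ᵐ[μ] q') :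
    𝔈.cond S (v q') ≤ᵐ[μ] 𝔈.cond S (v q) := by
  have hq0 := hq.stop0 hS
  have hq'0 := hq'.stop0 hS
  have hw := hq.min hq'
  have hw0 := hw.stop0 hS
  have hvw : v (fun ω => min (q ω) (q' ω)) =ᵐ[μ] v q := by
    filter_upwards [value_eq_of_eq hX hv hw0 hq0, hqq'] with ω h hle
    exact h (min_eq_left hle)
  have hdom := fun {θ} (hθ : Stop0 ℱ T θ) => value_mem_domPos hT hX hbdd hv hθ
  -- pass through `q ∧ q'`, which is `q` a.e.
  exact (𝔈.time_consistent hS hw0 hw.2.1 (hdom hq'0).1 (hdom hq'0).2).symm.le.trans <|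
    (cond_mono hS (cond_mem_domPos hw0 (hdom hq'0)) (hdom hw0)
      (cond_value_le hT hX hbdd hv hw0 hq'0 fun _ => min_le_right _ _)).trans
    (cond_congr hS (hdom hw0) (hdom hq0) hvw).le

end ValueFunction
lemma IsEssInfFam.ae_le_of_subset {s t : Set (Ω → ℝ)} {f g : Ω → ℝ} (hst : s ⊆ t)
    (hf : IsEssInfFam μ t f) (hg : IsEssInfFam μ s g) : f ≤ᵐ[μ] g :=
  hg.2 f fun h hh => hf.1 h (hst hh)

lemma IsEssInfFam.ae_eq {s : Set (Ω → ℝ)} {f g : Ω → ℝ} (hf : IsEssInfFam μ s f)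
    (hg : IsEssInfFam μ s g) : f =ᵐ[μ] g :=
  (hf.ae_le_of_subset subset_rfl hg).antisymm (hg.ae_le_of_subset subset_rfl hf)

section LambdaStopping

open FExp

variable {𝔈 : FExp μ T ℱ} {X v : (Ω → ℝ) → Ω → ℝ} {l : ℝ} {θ τ σ : Ω → ℝ}

variable (μ T ℱ) in
/-- `τ^λ(θ)` is the essential infimum of this set. -/
def lambdaSet (X v : (Ω → ℝ) → Ω → ℝ) (l : ℝ) (θ : Ω → ℝ) : Set (Ω → ℝ) :=
  {τ | IsStopIn ℱ T θ τ ∧ (fun ω => l * v τ ω) ≤ᵐ[μ] X τ}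

lemma lambdaSet_anti {θ' : Ω → ℝ} (hθ : ∀ ω, θ ω ≤ θ' ω) :
    lambdaSet μ T ℱ X v l θ' ⊆ lambdaSet μ T ℱ X v l θ :=
  fun _ hτ => ⟨hτ.1.mono_left hθ, hτ.2⟩

lemma const_mem_lambdaSet (hT : 0 ≤ T) (hX : Admissible 𝔈 X) (hv : IsValueFam 𝔈 X v)
    (hl : l ≤ 1) (hθ : ∀ ω, θ ω ≤ T) : (fun _ => T) ∈ lambdaSet μ T ℱ X v l θ := by
  refine ⟨isStopIn_const hθ, ?_⟩
  filter_upwards [value_terminal hT hX hv, (hX.mem_domPos (stop0_const hT le_rfl)).2] with ω h h₀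
  rw [h]
  exact mul_le_of_le_one_left h₀ hl

lemma min_mem_lambdaSet (hX : Admissible 𝔈 X) (hv : IsValueFam 𝔈 X v) (hθ : Stop0 ℱ T θ)
    (hτ : τ ∈ lambdaSet μ T ℱ X v l θ) (hσ : σ ∈ lambdaSet μ T ℱ X v l θ) :
    (fun ω => min (τ ω) (σ ω)) ∈ lambdaSet μ T ℱ X v l θ := by
  have hw := hτ.1.min hσ.1
  have hw0 := hw.stop0 hθ
  have hτ0 := hτ.1.stop0 hθ
  have hσ0 := hσ.1.stop0 hθ
  refine ⟨hw, ?_⟩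
  filter_upwards [value_eq_of_eq hX hv hw0 hτ0, value_eq_of_eq hX hv hw0 hσ0, hX.2 _ _ hw0 hτ0,
    hX.2 _ _ hw0 hσ0, hτ.2, hσ.2] with ω hvτ hvσ hXτ hXσ hτω hσω
  rcases le_total (τ ω) (σ ω) with hle | hle
  · have he : min (τ ω) (σ ω) = τ ω := min_eq_left hle
    rw [hvτ he, hXτ he]
    exact hτω
  · have he : min (τ ω) (σ ω) = σ ω := min_eq_right hle
    rw [hvσ he, hXσ he]
    exact hσω

theorem exists_isEssInfFam_lambdaSet [IsFiniteMeasure μ] (hT : 0 ≤ T)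
    (hrcf : RightContinuousFiltration ℱ) (hX : Admissible 𝔈 X) (hv : IsValueFam 𝔈 X v)
    (hl : l ≤ 1) (hθ : Stop0 ℱ T θ) :
    ∃ q, IsStopIn ℱ T θ q ∧ IsEssInfFam μ (lambdaSet μ T ℱ X v l θ) q := by
  obtain ⟨qs, hqs, hlow⟩ := exists_seq_iInf_ae_le (μ := μ)
    ⟨_, const_mem_lambdaSet hT hX hv hl hθ.2.2⟩ (fun τ hτ => measurable_of_isStoppingTime hτ.1.1)
    (fun τ hτ σ hσ => ⟨_, min_mem_lambdaSet hX hv hθ hτ hσ, EventuallyLE.rfl⟩)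
    (fun τ hτ => Eventually.of_forall hτ.1.2.1)
  have hbdd : ∀ ω, BddBelow (range fun n => qs n ω) :=
    fun ω => ⟨θ ω, forall_mem_range.2 fun n => (hqs n).1.2.1 ω⟩
  have := hrcf.isRightContinuous
  refine ⟨fun ω => ⨅ n, qs n ω, ⟨isStoppingTime_ciInf (fun n => (hqs n).1.1) hbdd,
    fun ω => le_ciInf fun n => (hqs n).1.2.1 ω,
    fun ω => (ciInf_le (hbdd ω) 0).trans ((hqs 0).1.2.2 ω)⟩, hlow, fun g hg => ?_⟩
  filter_upwards [ae_all_iff.2 fun n => hg _ (hqs n)] with ω h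
  exact le_ciInf h

/-- Stopping at `θ` where `λ v(θ) ≤ X(θ)` and at `T` elsewhere is admissible in `lambdaSet`,
so `τ^λ(θ) = θ` on that set, where `E_θ[v(τ^λ(θ))] = v(θ) ≥ X(θ)`; elsewhere `X(θ) < λ v(θ)`. -/
theorem X_le_mul_value_add_cond_value [IsFiniteMeasure μ] [NeZero μ] (hT : 0 ≤ T)
    (hX : Admissible 𝔈 X) (hbdd : BddRewardE0 𝔈 X) (hv : IsValueFam 𝔈 X v) (hl : l ≤ 1)
    (hθ : Stop0 ℱ T θ) {q : Ω → ℝ} (hq : IsStopIn ℱ T θ q)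
    (hlow : ∀ τ ∈ lambdaSet μ T ℱ X v l θ, q ≤ᵐ[μ] τ) :
    X θ ≤ᵐ[μ] fun ω => l * v θ ω + (1 - l) * 𝔈.cond θ (v q) ω := by
  have hvθ := value_mem_domPos hT hX hbdd hv hθ
  have hvq := value_mem_domPos hT hX hbdd hv (hq.stop0 hθ)
  have hvθ_self := cond_value_self hT hX hbdd hv hθ
  have hT0 : Stop0 ℱ T (fun _ => T) := stop0_const hT le_rfl
  set A := {ω | l * 𝔈.cond θ (v θ) ω ≤ X θ ω}
  have hA : MeasurableSet[hθ.1.measurableSpace] A :=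
    measurableSet_le ((𝔈.cond_adapted hθ hvθ.1 hvθ.2).const_mul l) (hX.measurable hθ)
  have hτ := hθ.isStopIn_self.piecewise hθ.1 (isStopIn_const hθ.2.2) hA
  have hτ0 := hτ.stop0 hθ
  have hτΛ : A.piecewise θ (fun _ => T) ∈ lambdaSet μ T ℱ X v l θ := by
    refine ⟨hτ, ?_⟩
    filter_upwards [value_eq_of_eq hX hv hτ0 hθ, value_eq_of_eq hX hv hτ0 hT0, hX.2 _ _ hτ0 hθ,
      hX.2 _ _ hτ0 hT0, hvθ_self, value_terminal hT hX hv, (hX.mem_domPos hT0).2]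
      with ω hvθω hvTω hXθω hXTω hselfω hconstω h₀
    by_cases hω : ω ∈ A
    · have he := piecewise_eq_of_mem A θ (fun _ => T) hω
      rw [hvθω he, hXθω he, ← hselfω]
      exact hω
    · have he := piecewise_eq_of_notMem A θ (fun _ => T) hω
      rw [hvTω he, hXTω he, hconstω]
      exact mul_le_of_le_one_left h₀ hl
  have hqA : A.indicator (v q) =ᵐ[μ] A.indicator (v θ) := by
    have hqθ : ∀ᵐ ω ∂μ, ω ∈ A → q ω = θ ω := (hlow _ hτΛ).mono fun ω h hω =>
      le_antisymm (h.trans_eq (piecewise_eq_of_mem _ _ _ hω)) (hq.2.1 ω)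
    filter_upwards [hqθ, value_eq_of_eq hX hv (hq.stop0 hθ) hθ] with ω h₁ h₂
    by_cases hω : ω ∈ A
    · simp [hω, h₂ (h₁ hω)]
    · simp [hω]
  filter_upwards [indicator_cond_congr hθ hvq hvθ hA hqA, hvθ_self, X_le_value hX hv hθ,
    (cond_mem_domPos hθ hvq).2] with ω h₁ h₂ h₃ (h₀ : 0 ≤ 𝔈.cond θ (v q) ω)
  by_cases hω : ω ∈ A
  · simp only [indicator_of_mem hω] at h₁
    rw [h₁, h₂]
    linarith
  · have hlt : X θ ω < l * v θ ω := h₂ ▸ lt_of_not_ge hω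
    nlinarith

theorem value_eq_cond_value_of_isEssInfFam [IsFiniteMeasure μ] [NeZero μ] (hT : 0 ≤ T)
    (hrcf : RightContinuousFiltration ℱ) (h6 : 𝔈.Subadditive) (h7 : 𝔈.PosHom)
    (hX : Admissible 𝔈 X) (hbdd : BddRewardE0 𝔈 X) (hv : IsValueFam 𝔈 X v) (hl0 : 0 ≤ l)
    (hl1 : l < 1) {S q : Ω → ℝ} (hS : Stop0 ℱ T S) (hq : IsStopIn ℱ T S q)
    (hqS : IsEssInfFam μ (lambdaSet μ T ℱ X v l S) q) :
    v S =ᵐ[μ] 𝔈.cond S (v q) := by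
  have hdom := fun {θ} (hθ : Stop0 ℱ T θ) => value_mem_domPos hT hX hbdd hv hθ
  have hub : ∀ ρ, IsStopIn ℱ T S ρ →
      𝔈.cond S (X ρ) ≤ᵐ[μ] fun ω => l * v S ω + (1 - l) * 𝔈.cond S (v q) ω := by
    intro ρ hρ
    have hρ0 := hρ.stop0 hS
    obtain ⟨qρ, hqρ, hqρΛ⟩ := exists_isEssInfFam_lambdaSet hT hrcf hX hv hl1.le hρ0
    have hqρ0 := hqρ.stop0 hρ0
    have hJ := cond_mem_domPos hρ0 (hdom hqρ0)
    have hl1' : 0 ≤ 1 - l := sub_nonneg.2 hl1.le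
    have h₁ := cond_mono hS (hX.mem_domPos hρ0)
      (add_mem_domPos (smul_mem_domPos (hdom hρ0) hl0) (smul_mem_domPos hJ hl1'))
      (X_le_mul_value_add_cond_value hT hX hbdd hv hl1.le hρ0 hqρ hqρΛ.1)
    have h₂ := cond_smul_add_le h6 h7 hS (hdom hρ0) hJ hl0 hl1'
    have h₃ := cond_value_le hT hX hbdd hv hS hρ0 hρ.2.1
    have h₄ := 𝔈.time_consistent hS hρ0 hρ.2.1 (hdom hqρ0).1 (hdom hqρ0).2
    have h₅ := cond_value_le_of_ae_le hT hX hbdd hv hS hq (hqρ.mono_left hρ.2.1)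
      (hqS.ae_le_of_subset (lambdaSet_anti hρ.2.1) hqρΛ)
    filter_upwards [h₁, h₂, h₃, h₄, h₅] with ω h₁ h₂ h₃ h₄ h₅
    calc 𝔈.cond S (X ρ) ω
        ≤ l * 𝔈.cond S (v ρ) ω + (1 - l) * 𝔈.cond S (𝔈.cond ρ (v qρ)) ω := h₁.trans h₂
      _ ≤ l * v S ω + (1 - l) * 𝔈.cond S (v q) ω := by
        rw [h₄]
        gcongr
  have hle := (hv S hS).2 _ fun _ ⟨ρ, hρ, hg⟩ => hg ▸ hub ρ hρ
  refine EventuallyLE.antisymm ?_ (cond_value_le hT hX hbdd hv hS (hq.stop0 hS) hq.2.1)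
  filter_upwards [hle] with ω h
  nlinarith

end LambdaStopping

theorem essInf_lambda_stopping_general [IsProbabilityMeasure μ] (hT : 0 < T)
    (hcf : CompleteFiltration μ ℱ) (hrcf : RightContinuousFiltration ℱ)
    (𝔈 : FExp μ T ℱ) (h6 : 𝔈.Subadditive) (h7 : 𝔈.PosHom)
    (X v : (Ω → ℝ) → Ω → ℝ) (hX : Admissible 𝔈 X)
    (hbdd : BddRewardE0 𝔈 X) (hv : IsValueFam 𝔈 X v)
    (S : Ω → ℝ) (hS : Stop0 ℱ T S) (l : ℝ) (hl : l ∈ Set.Ioo (0 : ℝ) 1)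
    (tl : Ω → ℝ) (htl_bd : ∀ ω, S ω ≤ tl ω ∧ tl ω ≤ T)
    (htl : IsEssInfFam μ
      {τ | IsStopIn ℱ T S τ ∧ (fun ω => l * v τ ω) ≤ᵐ[μ] X τ} tl) :
    IsStoppingTime ℱ (fun ω => (tl ω : WithTop ℝ)) ∧ v S =ᵐ[μ] 𝔈.cond S (v tl) := by
  obtain ⟨hl0, hl1⟩ := hl
  obtain ⟨q, hq, hqS⟩ := exists_isEssInfFam_lambdaSet hT.le hrcf hX hv hl1.le hS
  have htl_stop := isStoppingTime_of_ae_eq hcf hq.1 (htl.ae_eq hqS)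
  exact ⟨htl_stop, value_eq_cond_value_of_isEssInfFam hT.le hrcf h6 h7 hX hbdd hv hl0.le hl1 hS
    ⟨htl_stop, fun ω => (htl_bd ω).1, fun ω => (htl_bd ω).2⟩ htl⟩

/-- `τ^λ(S)` is a stopping time and `v(S) = E_S[v(τ^λ(S))]`. -/
theorem essInf_lambda_stopping [IsProbabilityMeasure μ] (hT : 0 < T)
    (hcf : CompleteFiltration μ ℱ) (hrcf : RightContinuousFiltration ℱ)
    (𝔈 : FExp μ T ℱ) (h6 : 𝔈.Subadditive) (h7 : 𝔈.PosHom)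
    (X v : (Ω → ℝ) → Ω → ℝ) (hX : Admissible 𝔈 X) (hXce : CE 𝔈 X)
    (hbdd : BddRewardE0 𝔈 X) (hv : IsValueFam 𝔈 X v)
    (S : Ω → ℝ) (hS : Stop0 ℱ T S) (l : ℝ) (hl : l ∈ Set.Ioo (0 : ℝ) 1)
    (tl : Ω → ℝ) (htl_bd : ∀ ω, S ω ≤ tl ω ∧ tl ω ≤ T)
    (htl : IsEssInfFam μ
      {τ | IsStopIn ℱ T S τ ∧ (fun ω => l * v τ ω) ≤ᵐ[μ] X τ} tl) :
    IsStoppingTime ℱ (fun ω => (tl ω : WithTop ℝ)) ∧ v S =ᵐ[μ] 𝔈.cond S (v tl) :=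
  essInf_lambda_stopping_general hT hcf hrcf 𝔈 h6 h7 X v hX hbdd hv S hS l hl tl htl_bd htl

end OptMultStop
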